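/- The functions φ_{ij} for (i,j) ∈ ℤ² with 2i+j ∉ {0,1}, together with φ_i and ψ_i for i ∈ ℤ, all belong to 𝔄_{1,1} and form a ℂ-vector-space basis of 𝔄_{1,1}. -/

import Mathlib

set_option synthInstance.maxHeartbeats 400000
set_option maxHeartbeats 1000000

noncomputable section
open scoped BigOperators

/-- Laurent polynomials `ℂ[x^{±1}, y^{±1}]`, as the group algebra of `ℤ²`. -/
abbrev Alg2 : Type := AddMonoidAlgebra ℂ (ℤ × ℤ)

/-- The Euler operator `∂_x = x ∂/∂x` on Laurent polynomials. -/
def eulx : Alg2 →ₗ[ℂ] Alg2 :=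
  (AddMonoidAlgebra.coeffLinearEquiv ℂ).symm.toLinearMap ∘ₗ
  Finsupp.lsum ℂ (fun μ : ℤ × ℤ => ((μ.1 : ℂ)) • Finsupp.lsingle μ) ∘ₗ
  (AddMonoidAlgebra.coeffLinearEquiv ℂ).toLinearMap

/-- The Euler operator `∂_y = y ∂/∂y` on Laurent polynomials. -/
def euly : Alg2 →ₗ[ℂ] Alg2 :=
  (AddMonoidAlgebra.coeffLinearEquiv ℂ).symm.toLinearMap ∘ₗ
  Finsupp.lsum ℂ (fun μ : ℤ × ℤ => ((μ.2 : ℂ)) • Finsupp.lsingle μ) ∘ₗ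
  (AddMonoidAlgebra.coeffLinearEquiv ℂ).toLinearMap

/-- The Laurent monomial `x^i y^j`. -/
def monA2 (μ : ℤ × ℤ) : Alg2 := AddMonoidAlgebra.single μ 1

/-- Quasi-invariance with parameter `k = −1/2`: `(∂_x + (1/2) ∂_y) f` is divisible
by `x − y`. -/
def QuasiInv11 (f : Alg2) : Prop :=
  (monA2 (1, 0) - monA2 (0, 1)) ∣ (eulx f + (2⁻¹ : ℂ) • euly f)

/-- The algebra `𝔄_{1,1}` of quasi-invariant Laurent polynomials, as a subspace of
`ℂ[x^{±1}, y^{±1}]`. -/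
def AA11 : Submodule ℂ Alg2 where
  carrier := {f | QuasiInv11 f}
  add_mem' := by
    intro f g hf hg
    show QuasiInv11 (f + g)
    unfold QuasiInv11
    rw [map_add, map_add, smul_add, add_add_add_comm]
    exact dvd_add hf hg
  zero_mem' := by
    show QuasiInv11 0
    unfold QuasiInv11
    rw [map_zero, map_zero, smul_zero, add_zero]
    exact dvd_zero _
  smul_mem' := by
    intro c f hf
    show QuasiInv11 (c • f)
    unfold QuasiInv11
    rw [map_smul, map_smul, smul_comm (2⁻¹ : ℂ) c, ← smul_add, Algebra.smul_def]
    exact (hf : QuasiInv11 f).mul_left _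

/-- `φ_{ij} = x^i y^j − ((2i+j)/(2i+j−1)) x^{i−1} y^{j+1}` (for `2i+j ≠ 1`). -/
def phiA (i j : ℤ) : Alg2 :=
  AddMonoidAlgebra.single (i, j) 1
    - (((2*i + j : ℤ) : ℂ) / ((2*i + j - 1 : ℤ) : ℂ)) • AddMonoidAlgebra.single (i-1, j+1) 1

/-- `φ_i = x^i y^{−2i}` (the case `2i+j = 0` of `φ_{ij}`). -/
def phi0A (i : ℤ) : Alg2 := AddMonoidAlgebra.single (i, -2*i) 1

/-- `ψ_i = x^{i+1} y^{−1−2i} + x^{i−1} y^{1−2i}`. -/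
def psiA (i : ℤ) : Alg2 :=
  AddMonoidAlgebra.single (i+1, -1-2*i) 1 + AddMonoidAlgebra.single (i-1, 1-2*i) 1

/-- The index set for the basis of `𝔄_{1,1}`: pairs `(i,j)` with `2i+j ∉ {0,1}`, together with
two copies of `ℤ` (indexing the `φ_i` and the `ψ_i`). -/
abbrev BasisIdx : Type :=
  {p : ℤ × ℤ // 2 * p.1 + p.2 ≠ 0 ∧ 2 * p.1 + p.2 ≠ 1} ⊕ (ℤ ⊕ ℤ)

/-- The family `φ_{ij}` (for `2i+j ∉ {0,1}`), `φ_i`, `ψ_i`. -/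
def basisFam : BasisIdx → Alg2 :=
  Sum.elim (fun p => phiA p.1.1 p.1.2) (Sum.elim phi0A psiA)

-- AUX START

/-- Generic weighted coefficient functional. -/
def WF (w : ℤ × ℤ → ℂ) : Alg2 →ₗ[ℂ] ℂ :=
  (Finsupp.lsum ℂ fun ν => w ν • (LinearMap.id : ℂ →ₗ[ℂ] ℂ)) ∘ₗ
  (AddMonoidAlgebra.coeffLinearEquiv ℂ).toLinearMap

lemma WF_apply (w : ℤ × ℤ → ℂ) (f : Alg2) : WF w f = f.coeff.sum fun ν d => w ν * d := rfl

lemma WF_single (w : ℤ × ℤ → ℂ) (μ : ℤ × ℤ) (c : ℂ) :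
    WF w (AddMonoidAlgebra.single μ c) = w μ * c := by
  rw [WF_apply, AddMonoidAlgebra.coeff_single, Finsupp.sum_single_index]
  simp

lemma WF_congr (w w' : ℤ × ℤ → ℂ) (f : Alg2) (h : ∀ μ ∈ f.coeff.support, w μ = w' μ) :
    WF w f = WF w' f := by
  rw [WF_apply, WF_apply]
  exact Finset.sum_congr rfl fun μ hμ => by simp only []; rw [h μ hμ]

lemma WF_ext (w w' : ℤ × ℤ → ℂ) (h : ∀ μ, w μ = w' μ) : WF w = WF w' := by
  apply LinearMap.ext; intro f; exact WF_congr w w' f fun μ _ => h μ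

/-- Evaluation at a point. -/
lemma WF_eval (p : ℤ × ℤ) (f : Alg2) :
    WF (fun μ => if μ = p then 1 else 0) f = f.coeff p := by
  rw [WF_apply]
  classical
  rw [show (fun (ν : ℤ×ℤ) (d : ℂ) => (if ν = p then (1:ℂ) else 0) * d)
      = fun ν d => if ν = p then d else 0 by funext ν d; split_ifs <;> simp]
  rw [Finsupp.sum_ite_eq' f.coeff p fun _ d => d]
  split_ifs with h
  · rfl
  · exact (Finsupp.notMem_support_iff.mp h).symm

lemma eulx_single (μ : ℤ × ℤ) (c : ℂ) :
    eulx (AddMonoidAlgebra.single μ c) = (μ.1 : ℂ) • AddMonoidAlgebra.single μ c := by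
  show AddMonoidAlgebra.ofCoeff ((Finsupp.single μ c).sum
    (fun ν d => (ν.1 : ℂ) • Finsupp.single ν d)) = _
  rw [Finsupp.sum_single_index]
  · rfl
  · simp

lemma euly_single (μ : ℤ × ℤ) (c : ℂ) :
    euly (AddMonoidAlgebra.single μ c) = (μ.2 : ℂ) • AddMonoidAlgebra.single μ c := by
  show AddMonoidAlgebra.ofCoeff ((Finsupp.single μ c).sum
    (fun ν d => (ν.2 : ℂ) • Finsupp.single ν d)) = _
  rw [Finsupp.sum_single_index]
  · rfl
  · simp

/-- The operator `L = ∂_x + (1/2)∂_y` on a monomial. -/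
lemma L_single (μ : ℤ × ℤ) (c : ℂ) :
    eulx (AddMonoidAlgebra.single μ c) + (2⁻¹ : ℂ) • euly (AddMonoidAlgebra.single μ c)
      = (((2 * μ.1 + μ.2 : ℤ) : ℂ) / 2) • AddMonoidAlgebra.single μ c := by
  rw [eulx_single, euly_single, smul_smul, ← add_smul]
  congr 1
  push_cast
  ring

lemma single_mul_single' (μ ν ρ : ℤ × ℤ) (c : ℂ) (h : μ + ν = ρ) :
    (AddMonoidAlgebra.single μ (1:ℂ) : Alg2) * AddMonoidAlgebra.single ν c
      = AddMonoidAlgebra.single ρ c := by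
  rw [AddMonoidAlgebra.single_mul_single, h, one_mul]


/-! ### Membership in `AA11` -/

lemma L_phiA (i j : ℤ) (h1 : 2 * i + j ≠ 1) :
    eulx (phiA i j) + (2⁻¹ : ℂ) • euly (phiA i j)
      = (((2 * i + j : ℤ) : ℂ) / 2) •
          ((AddMonoidAlgebra.single (i, j) 1 : Alg2) - AddMonoidAlgebra.single (i - 1, j + 1) 1) := by
  have hn1 : ((2 * i + j - 1 : ℤ) : ℂ) ≠ 0 := by
    exact_mod_cast sub_ne_zero.mpr (by exact_mod_cast h1)
  rw [phiA]
  rw [map_sub, map_sub, map_smul, map_smul, eulx_single, eulx_single,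
    euly_single, euly_single]
  match_scalars
  · push_cast; field_simp
  · have h2 := hn1
    push_cast at h2 ⊢
    field_simp [h2]
    ring

lemma mem_phiA (i j : ℤ) (h1 : 2 * i + j ≠ 1) : phiA i j ∈ AA11 := by
  refine ⟨(((2 * i + j : ℤ) : ℂ) / 2) • AddMonoidAlgebra.single (i - 1, j) 1, ?_⟩
  rw [L_phiA i j h1, monA2, monA2, mul_smul_comm, sub_mul,
    single_mul_single' _ _ (i, j) _ (by simp only [Prod.mk_add_mk, Prod.mk.injEq]; omega),
    single_mul_single' _ _ (i - 1, j + 1) _ (by simp only [Prod.mk_add_mk, Prod.mk.injEq]; omega)]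

lemma mem_phi0A (i : ℤ) : phi0A i ∈ AA11 := by
  refine ⟨0, ?_⟩
  rw [mul_zero, phi0A]
  rw [eulx_single, euly_single, smul_smul, ← add_smul]
  convert zero_smul ℂ _
  push_cast; ring

lemma mem_psiA (i : ℤ) : psiA i ∈ AA11 := by
  refine ⟨(2⁻¹ : ℂ) • ((AddMonoidAlgebra.single (i, -1 - 2*i) 1 : Alg2)
      + AddMonoidAlgebra.single (i - 1, -2*i) 1), ?_⟩
  rw [psiA, mul_smul_comm, mul_add, monA2, monA2, sub_mul, sub_mul,
    single_mul_single' _ _ (i + 1, -1 - 2*i) _ (by simp only [Prod.mk_add_mk, Prod.mk.injEq]; omega),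
    single_mul_single' _ _ (i, -2*i) _ (by simp only [Prod.mk_add_mk, Prod.mk.injEq]; omega),
    single_mul_single' _ _ (i, -2*i) _ (by simp only [Prod.mk_add_mk, Prod.mk.injEq]; omega),
    single_mul_single' _ _ (i - 1, 1 - 2*i) _ (by simp only [Prod.mk_add_mk, Prod.mk.injEq]; omega)]
  rw [map_add, map_add, eulx_single, eulx_single, euly_single, euly_single]
  match_scalars
  · push_cast; ring
  · push_cast; ring
  · push_cast; ring


/-! ### Weighted functionals on the basis elements -/

lemma WF_phiA (w : ℤ × ℤ → ℂ) (i j : ℤ) :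
    WF w (phiA i j)
      = w (i, j) - ((2*i + j : ℤ) : ℂ) / ((2*i + j - 1 : ℤ) : ℂ) * w (i-1, j+1) := by
  rw [phiA]
  rw [map_sub, map_smul, WF_single, WF_single, mul_one, mul_one, smul_eq_mul]

lemma WF_phi0A (w : ℤ × ℤ → ℂ) (i : ℤ) : WF w (phi0A i) = w (i, -2*i) := by
  rw [phi0A]
  rw [WF_single, mul_one]

lemma WF_psiA (w : ℤ × ℤ → ℂ) (i : ℤ) :
    WF w (psiA i) = w (i+1, -1-2*i) + w (i-1, 1-2*i) := by
  rw [psiA]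
  rw [map_add, WF_single, WF_single, mul_one, mul_one]

/-! ### The diagonal-sum constraints satisfied by members of `AA11` -/

/-- Weight: indicator of the diagonal `i + j = d`. -/
def wtD (d : ℤ) (μ : ℤ × ℤ) : ℂ := if μ.1 + μ.2 = d then 1 else 0

/-- Weight: `2i+j` on the diagonal `i + j = d`. -/
def wtF (d : ℤ) (μ : ℤ × ℤ) : ℂ := if μ.1 + μ.2 = d then ((2*μ.1 + μ.2 : ℤ) : ℂ) else 0

lemma DiagF_mul_single (d : ℤ) (ν : ℤ × ℤ) (g : Alg2) :
    WF (wtD d) (g * AddMonoidAlgebra.single ν 1) = WF (wtD (d - ν.1 - ν.2)) g := by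
  induction g using AddMonoidAlgebra.induction_linear with
  | zero => simp
  | add f g hf hg => rw [add_mul, map_add, map_add, hf, hg]
  | single μ c =>
    have hmul : (AddMonoidAlgebra.single μ c : Alg2) * AddMonoidAlgebra.single ν 1
        = AddMonoidAlgebra.single (μ + ν) c :=
      (AddMonoidAlgebra.single_mul_single _ _ _ _).trans (by rw [mul_one])
    rw [hmul, WF_single, WF_single]
    unfold wtD
    obtain ⟨μ1, μ2⟩ := μ
    obtain ⟨ν1, ν2⟩ := ν
    simp only [Prod.mk_add_mk]
    split_ifs <;> first | rfl | omega

lemma DiagF_dvd (d : ℤ) (g : Alg2) :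
    WF (wtD d) ((monA2 (1, 0) - monA2 (0, 1)) * g) = 0 := by
  rw [sub_mul, map_sub, monA2, monA2, mul_comm, mul_comm (AddMonoidAlgebra.single (0,1) 1) g,
    DiagF_mul_single, DiagF_mul_single]
  norm_num

lemma DiagF_L (d : ℤ) (f : Alg2) :
    WF (wtD d) (eulx f + (2⁻¹ : ℂ) • euly f) = 2⁻¹ * WF (wtF d) f := by
  induction f using AddMonoidAlgebra.induction_linear with
  | zero => simp
  | add f g hf hg =>
    have e1 : eulx (f + g) = eulx f + eulx g := map_add _ _ _
    have e2 : euly (f + g) = euly f + euly g := map_add _ _ _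
    have e3 : WF (wtF d) (f + g) = WF (wtF d) f + WF (wtF d) g := map_add _ _ _
    rw [e1, e2, smul_add, add_add_add_comm, map_add, hf, hg, e3]
    ring
  | single μ c =>
    rw [L_single, map_smul, WF_single, WF_single, smul_eq_mul]
    unfold wtD wtF
    split_ifs
    · push_cast; ring
    · ring

lemma FullF_eq_zero (f : Alg2) (hf : f ∈ AA11) (d : ℤ) : WF (wtF d) f = 0 := by
  obtain ⟨q, hq⟩ := hf
  have h1 : WF (wtD d) (eulx f + (2⁻¹ : ℂ) • euly f) = 0 := by
    rw [hq]; exact DiagF_dvd d q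
  rw [DiagF_L] at h1
  have h2 : (2⁻¹ : ℂ) ≠ 0 := by norm_num
  exact (mul_eq_zero.mp h1).resolve_left h2


/-! ### The dual family of coordinate functionals -/

/-- Weight: `2i+j` on the part of the diagonal `i+j = d` where `2i+j ≥ n`. -/
def wtA (d n : ℤ) (μ : ℤ × ℤ) : ℂ :=
  if μ.1 + μ.2 = d ∧ n ≤ 2*μ.1 + μ.2 then ((2*μ.1 + μ.2 : ℤ) : ℂ) else 0

/-- Weight: indicator of the point `p`. -/
def wtE (p : ℤ × ℤ) (μ : ℤ × ℤ) : ℂ := if μ = p then 1 else 0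

/-- The family of coordinate functionals dual to `basisFam`. -/
def lam : BasisIdx → (Alg2 →ₗ[ℂ] ℂ)
  | Sum.inl p => (((2*p.1.1 + p.1.2 : ℤ) : ℂ))⁻¹ • WF (wtA (p.1.1 + p.1.2) (2*p.1.1 + p.1.2))
  | Sum.inr (Sum.inl i) => WF (wtE (i, -2*i))
  | Sum.inr (Sum.inr i) => WF (wtA (-i) 1)

lemma lam_basisFam (t s : BasisIdx) :
    lam t (basisFam s) = if s = t then 1 else 0 := by
  classical
  obtain p | i | i := t <;> obtain q | a | a := s
  -- case t = inl, s = inl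
  · obtain ⟨⟨i, j⟩, hp0, hp1⟩ := p
    obtain ⟨⟨u, v⟩, hq0, hq1⟩ := q
    simp only at hp0 hp1 hq0 hq1
    have hq1' : ((2*u + v - 1 : ℤ) : ℂ) ≠ 0 := by
      exact_mod_cast sub_ne_zero.mpr (by exact_mod_cast hq1)
    simp only [lam, basisFam, Sum.elim_inl, LinearMap.smul_apply, WF_phiA, smul_eq_mul,
      Sum.inl.injEq, Subtype.mk.injEq, Prod.mk.injEq]
    unfold wtA
    simp only
    by_cases h3 : u = i ∧ v = j
    · obtain ⟨rfl, rfl⟩ := h3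
      rw [if_pos (show u + v = u + v ∧ 2*u + v ≤ 2*u + v from by omega),
        if_neg (show ¬(u - 1 + (v + 1) = u + v ∧ 2*u + v ≤ 2*(u-1) + (v+1)) from by omega),
        if_pos ⟨rfl, rfl⟩, mul_zero, sub_zero, inv_mul_cancel₀ (by exact_mod_cast hq0)]
    · rw [if_neg h3]
      by_cases h1 : u + v = i + j ∧ 2*i + j ≤ 2*u + v
      · have h2 : u - 1 + (v + 1) = i + j ∧ 2*i + j ≤ 2*(u-1) + (v+1) := by omega
        rw [if_pos h1, if_pos h2,
          show ((2*(u-1) + (v+1) : ℤ) : ℂ) = ((2*u + v - 1 : ℤ) : ℂ) from by push_cast; ring,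
          div_mul_cancel₀ _ hq1', sub_self, mul_zero]
      · rw [if_neg h1,
          if_neg (show ¬(u - 1 + (v + 1) = i + j ∧ 2*i + j ≤ 2*(u-1) + (v+1)) from by omega)]
        norm_num
  -- case t = inl, s = inr inl
  · obtain ⟨⟨i, j⟩, hp0, hp1⟩ := p
    simp only [lam, basisFam, Sum.elim_inr, Sum.elim_inl, LinearMap.smul_apply, WF_phi0A,
      smul_eq_mul, reduceCtorEq, if_false]
    unfold wtA
    simp only
    split_ifs with h1
    · rw [show ((2*a + -2*a : ℤ) : ℂ) = 0 from by push_cast; ring, mul_zero]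
    · rw [mul_zero]
  -- case t = inl, s = inr inr
  · obtain ⟨⟨i, j⟩, hp0, hp1⟩ := p
    simp only [lam, basisFam, Sum.elim_inr, LinearMap.smul_apply, WF_psiA,
      smul_eq_mul, reduceCtorEq, if_false]
    unfold wtA
    simp only
    by_cases h1 : a + 1 + (-1 - 2*a) = i + j ∧ 2*i + j ≤ 2*(a+1) + (-1-2*a)
    · rw [if_pos h1,
        if_pos (show a - 1 + (1 - 2*a) = i + j ∧ 2*i + j ≤ 2*(a-1) + (1-2*a) from by omega),
        show ((2*(a+1) + (-1-2*a) : ℤ) : ℂ) = 1 from by push_cast; ring,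
        show ((2*(a-1) + (1-2*a) : ℤ) : ℂ) = -1 from by push_cast; ring]
      norm_num
    · rw [if_neg h1,
        if_neg (show ¬(a - 1 + (1 - 2*a) = i + j ∧ 2*i + j ≤ 2*(a-1) + (1-2*a)) from by omega)]
      norm_num
  -- case t = inr inl, s = inl
  · obtain ⟨⟨u, v⟩, hq0, hq1⟩ := q
    simp only at hq0 hq1
    simp only [lam, basisFam, Sum.elim_inl, WF_phiA, reduceCtorEq, if_false]
    unfold wtE
    rw [if_neg (show ¬((u, v) = ((i : ℤ), (-2*i : ℤ))) from by
        simp only [Prod.mk.injEq]; omega),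
      if_neg (show ¬((u - 1, v + 1) = ((i : ℤ), (-2*i : ℤ))) from by
        simp only [Prod.mk.injEq]; omega)]
    norm_num
  -- case t = inr inl, s = inr inl
  · simp only [lam, basisFam, Sum.elim_inr, Sum.elim_inl, WF_phi0A,
      Sum.inr.injEq, Sum.inl.injEq]
    unfold wtE
    by_cases ha : a = i
    · subst ha; rw [if_pos rfl, if_pos rfl]
    · rw [if_neg (fun h => ha (Prod.ext_iff.mp h).1), if_neg ha]
  -- case t = inr inl, s = inr inr
  · simp only [lam, basisFam, Sum.elim_inr, WF_psiA, Sum.inr.injEq, reduceCtorEq, if_false]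
    unfold wtE
    rw [if_neg (show ¬((a + 1, -1 - 2*a) = ((i : ℤ), (-2*i : ℤ))) from by
        simp only [Prod.mk.injEq]; omega),
      if_neg (show ¬((a - 1, 1 - 2*a) = ((i : ℤ), (-2*i : ℤ))) from by
        simp only [Prod.mk.injEq]; omega)]
    norm_num
  -- case t = inr inr, s = inl
  · obtain ⟨⟨u, v⟩, hq0, hq1⟩ := q
    simp only at hq0 hq1
    have hq1' : ((2*u + v - 1 : ℤ) : ℂ) ≠ 0 := by
      exact_mod_cast sub_ne_zero.mpr (by exact_mod_cast hq1)
    simp only [lam, basisFam, Sum.elim_inl, WF_phiA, reduceCtorEq, if_false]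
    unfold wtA
    simp only
    by_cases h1 : u + v = -i ∧ 1 ≤ 2*u + v
    · rw [if_pos h1,
        if_pos (show u - 1 + (v + 1) = -i ∧ 1 ≤ 2*(u-1) + (v+1) from by omega),
        show ((2*(u-1) + (v+1) : ℤ) : ℂ) = ((2*u + v - 1 : ℤ) : ℂ) from by push_cast; ring,
        div_mul_cancel₀ _ hq1', sub_self]
    · rw [if_neg h1,
        if_neg (show ¬(u - 1 + (v + 1) = -i ∧ 1 ≤ 2*(u-1) + (v+1)) from by omega)]
      norm_num
  -- case t = inr inr, s = inr inl
  · simp only [lam, basisFam, Sum.elim_inr, Sum.elim_inl, WF_phi0A, reduceCtorEq, if_false]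
    unfold wtA
    simp only
    rw [if_neg (show ¬(a + -2*a = -i ∧ 1 ≤ 2*a + -2*a) from by omega)]
    simp
  -- case t = inr inr, s = inr inr
  · simp only [lam, basisFam, Sum.elim_inr, WF_psiA, Sum.inr.injEq]
    unfold wtA
    simp only
    rw [if_neg (show ¬(a - 1 + (1 - 2*a) = -i ∧ 1 ≤ 2*(a-1) + (1-2*a)) from by omega),
      add_zero]
    by_cases ha : a = i
    · subst ha
      rw [if_pos (show a + 1 + (-1 - 2*a) = -a ∧ 1 ≤ 2*(a+1) + (-1-2*a) from by omega),
        if_pos rfl, show ((2*(a+1) + (-1-2*a) : ℤ) : ℂ) = 1 from by push_cast; ring]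
    · rw [if_neg (show ¬(a + 1 + (-1 - 2*a) = -i ∧ 1 ≤ 2*(a+1) + (-1-2*a)) from by omega),
        if_neg ha]

/-! ### Separation: an element killed by all `lam t` is zero -/

lemma WF_step (d n : ℤ) (f : Alg2) :
    WF (wtA d n) f - WF (wtA d (n+1)) f = (n : ℂ) * f.coeff (n - d, 2*d - n) := by
  rw [WF_apply, WF_apply, ← Finsupp.sum_sub]
  rw [show (fun (ν : ℤ × ℤ) (c : ℂ) => wtA d n ν * c - wtA d (n+1) ν * c)
      = fun ν c => (n : ℂ) * (if ν = (n - d, 2*d - n) then c else 0) from ?_]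
  · rw [← Finsupp.mul_sum, Finsupp.sum_ite_eq' f.coeff _ fun _ c => c]
    split_ifs with h
    · rfl
    · rw [(Finsupp.notMem_support_iff.mp h), mul_zero]
  · funext ν c
    unfold wtA
    obtain ⟨x, y⟩ := ν
    simp only [Prod.mk.injEq]
    by_cases h1 : x + y = d ∧ n ≤ 2*x + y
    · by_cases h2 : x + y = d ∧ n + 1 ≤ 2*x + y
      · rw [if_pos h1, if_pos h2, if_neg (show ¬(x = n - d ∧ y = 2*d - n) from by omega)]
        ring
      · have hx : x = n - d ∧ y = 2*d - n := by omega
        rw [if_pos h1, if_neg h2, if_pos hx,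
          show ((2*x + y : ℤ) : ℂ) = (n : ℂ) from by
            rw [show 2*x + y = n from by omega]]
        ring
    · rw [if_neg h1, if_neg (show ¬(x + y = d ∧ n + 1 ≤ 2*x + y) from by omega),
        if_neg (show ¬(x = n - d ∧ y = 2*d - n) from by omega)]
      ring

lemma wtA_zero_one (d : ℤ) : WF (wtA d 0) = WF (wtA d 1) := by
  apply WF_ext
  intro μ
  unfold wtA
  by_cases h1 : μ.1 + μ.2 = d ∧ (0:ℤ) ≤ 2*μ.1 + μ.2
  · by_cases h2 : μ.1 + μ.2 = d ∧ (1:ℤ) ≤ 2*μ.1 + μ.2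
    · rw [if_pos h1, if_pos h2]
    · rw [if_pos h1, if_neg h2, show 2*μ.1 + μ.2 = 0 from by omega]
      norm_num
  · rw [if_neg h1, if_neg (show ¬(μ.1 + μ.2 = d ∧ (1:ℤ) ≤ 2*μ.1 + μ.2) from by omega)]

lemma lam_zero_eq_zero (f : Alg2) (h : ∀ t, lam t f = 0) : f = 0 := by
  classical
  have hA : ∀ d n : ℤ, WF (wtA d n) f = 0 := by
    intro d n
    rcases eq_or_ne n 1 with rfl | hn1
    · have h1 := h (Sum.inr (Sum.inr (-d)))
      simp only [lam, neg_neg] at h1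
      exact h1
    rcases eq_or_ne n 0 with rfl | hn0
    · rw [wtA_zero_one]
      have h1 := h (Sum.inr (Sum.inr (-d)))
      simp only [lam, neg_neg] at h1
      exact h1
    · have h1 := h (Sum.inl ⟨(n - d, 2*d - n), by constructor <;> simp only <;> omega⟩)
      simp only [lam, LinearMap.smul_apply, smul_eq_mul] at h1
      rw [show 2*(n - d) + (2*d - n) = n from by ring,
        show n - d + (2*d - n) = d from by ring] at h1
      have hn : ((n : ℤ) : ℂ) ≠ 0 := by exact_mod_cast hn0
      exact (mul_eq_zero.mp h1).resolve_left (inv_ne_zero hn)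
  ext μ
  obtain ⟨x, y⟩ := μ
  rw [AddMonoidAlgebra.coeff_zero, Finsupp.coe_zero, Pi.zero_apply]
  rcases eq_or_ne (2*x + y) 0 with h0 | h0
  · have h1 := h (Sum.inr (Sum.inl x))
    simp only [lam] at h1
    unfold wtE at h1
    rw [WF_eval] at h1
    have hy : y = -2*x := by omega
    subst hy
    exact h1
  · have h1 := WF_step (x + y) (2*x + y) f
    rw [hA, hA, sub_self] at h1
    have h2 : ((2*x + y : ℤ) : ℂ) ≠ 0 := by exact_mod_cast h0
    have h3 := (mul_eq_zero.mp h1.symm).resolve_left h2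
    rw [show (2*x + y - (x + y), 2*(x + y) - (2*x + y)) = ((x : ℤ), (y : ℤ)) from by
      simp only [Prod.mk.injEq]; omega] at h3
    exact h3

/-! ### Finite support of the coordinates -/

lemma WF_ne_zero (w : ℤ × ℤ → ℂ) (f : Alg2) (h : WF w f ≠ 0) :
    ∃ μ ∈ f.coeff.support, w μ ≠ 0 := by
  by_contra hc
  push_neg at hc
  apply h
  rw [WF_apply, Finsupp.sum]
  exact Finset.sum_eq_zero fun μ hμ => by rw [hc μ hμ, zero_mul]

lemma AF_eq_Full (d n : ℤ) (f : Alg2)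
    (hlow : ∀ μ ∈ f.coeff.support, μ.1 + μ.2 = d → n ≤ 2*μ.1 + μ.2) :
    WF (wtA d n) f = WF (wtF d) f := by
  apply WF_congr
  intro μ hμ
  unfold wtA wtF
  by_cases h1 : μ.1 + μ.2 = d
  · rw [if_pos ⟨h1, hlow μ hμ h1⟩, if_pos h1]
  · rw [if_neg (fun hc => h1 hc.1), if_neg h1]

def embPhi : {p : ℤ × ℤ // 2*p.1 + p.2 ≠ 0 ∧ 2*p.1 + p.2 ≠ 1} ↪ BasisIdx :=
  ⟨Sum.inl, Sum.inl_injective⟩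

def embPhi0 : ℤ ↪ BasisIdx :=
  ⟨fun i => Sum.inr (Sum.inl i), fun a b hab => by simpa using hab⟩

def embPsi : ℤ ↪ BasisIdx :=
  ⟨fun i => Sum.inr (Sum.inr i), fun a b hab => by simpa using hab⟩

/-- A finite set containing all indices `t` with `lam t f ≠ 0` (for `f` satisfying the
diagonal constraints). -/
def bigF (f : Alg2) : Finset BasisIdx :=
  ((f.coeff.support.biUnion fun μ => f.coeff.support.biUnion fun μ' =>
      (Finset.Icc (2*μ'.1 + μ'.2 + 1) (2*μ.1 + μ.2)).image
        fun n => (n - (μ.1 + μ.2), 2*(μ.1 + μ.2) - n)).subtype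
      fun p => 2*p.1 + p.2 ≠ 0 ∧ 2*p.1 + p.2 ≠ 1).map embPhi
  ∪ (f.coeff.support.image fun μ => μ.1).map embPhi0
  ∪ (f.coeff.support.image fun μ => -(μ.1 + μ.2)).map embPsi

lemma lam_mem_bigF (f : Alg2) (hful : ∀ d, WF (wtF d) f = 0) (t : BasisIdx)
    (hne : lam t f ≠ 0) : t ∈ bigF f := by
  classical
  obtain p | i | i := t
  · obtain ⟨⟨i, j⟩, hp0, hp1⟩ := p
    simp only at hp0 hp1
    simp only [lam, LinearMap.smul_apply, smul_eq_mul, ne_eq] at hne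
    have hAne : WF (wtA (i+j) (2*i+j)) f ≠ 0 := fun hc => hne (by rw [hc, mul_zero])
    obtain ⟨μ, hμs, hμw⟩ := WF_ne_zero _ _ hAne
    have hμc : μ.1 + μ.2 = i + j ∧ 2*i + j ≤ 2*μ.1 + μ.2 := by
      by_contra hc; exact hμw (by unfold wtA; rw [if_neg hc])
    have hlow : ∃ μ' ∈ f.coeff.support, μ'.1 + μ'.2 = i + j ∧ 2*μ'.1 + μ'.2 < 2*i + j := by
      by_contra hc
      push_neg at hc
      exact hAne (by rw [AF_eq_Full _ _ _ hc, hful])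
    obtain ⟨μ', hμ's, hd', hlt⟩ := hlow
    rw [bigF]
    apply Finset.mem_union_left
    apply Finset.mem_union_left
    rw [Finset.mem_map]
    refine ⟨⟨(i, j), hp0, hp1⟩, ?_, rfl⟩
    rw [Finset.mem_subtype]
    simp only [Finset.mem_biUnion, Finset.mem_image, Finset.mem_Icc]
    refine ⟨μ, hμs, μ', hμ's, 2*i + j, ⟨by omega, by omega⟩, ?_⟩
    simp only [Prod.mk.injEq]
    constructor <;> omega
  · simp only [lam, ne_eq] at hne
    unfold wtE at hne
    rw [WF_eval] at hne
    rw [bigF]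
    apply Finset.mem_union_left
    apply Finset.mem_union_right
    rw [Finset.mem_map]
    refine ⟨i, ?_, rfl⟩
    rw [Finset.mem_image]
    exact ⟨(i, -2*i), Finsupp.mem_support_iff.mpr hne, rfl⟩
  · simp only [lam, ne_eq] at hne
    obtain ⟨μ, hμs, hμw⟩ := WF_ne_zero _ _ hne
    have hμc : μ.1 + μ.2 = -i := by
      by_contra hc
      exact hμw (by unfold wtA; rw [if_neg (fun hh => hc hh.1)])
    rw [bigF]
    apply Finset.mem_union_right
    rw [Finset.mem_map]
    refine ⟨i, ?_, rfl⟩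
    rw [Finset.mem_image]
    exact ⟨μ, hμs, by omega⟩

-- AUX END

/-- The functions `φ_{ij}` (for `2i+j ∉ {0,1}`), `φ_i` and `ψ_i` (`i ∈ ℤ`)
all belong to `𝔄_{1,1}` and form a `ℂ`-vector-space basis of `𝔄_{1,1}`. -/
theorem basis_of_AA11 :
    (∀ t : BasisIdx, basisFam t ∈ AA11) ∧
    LinearIndependent ℂ basisFam ∧
    Submodule.span ℂ (Set.range basisFam) = AA11 := by
  classical
  refine ⟨?_, ?_, ?_⟩
  · intro t
    obtain p | i | i := t
    · exact mem_phiA p.1.1 p.1.2 p.2.2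
    · exact mem_phi0A i
    · exact mem_psiA i
  · rw [linearIndependent_iff']
    intro s g hsum t ht
    have h1 := congrArg (lam t) hsum
    rw [map_sum, map_zero] at h1
    simp only [map_smul, lam_basisFam, smul_eq_mul, mul_ite, mul_one, mul_zero] at h1
    rwa [Finset.sum_ite_eq' s t g, if_pos ht] at h1
  · apply le_antisymm
    · rw [Submodule.span_le]
      rintro x ⟨t, rfl⟩
      obtain p | i | i := t
      · exact mem_phiA p.1.1 p.1.2 p.2.2
      · exact mem_phi0A i
      · exact mem_psiA i
    · intro f hf
      have hful : ∀ d, WF (wtF d) f = 0 := FullF_eq_zero f hf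
      have hg : ∀ s, lam s (f - ∑ t ∈ bigF f, lam t f • basisFam t) = 0 := by
        intro s
        rw [map_sub, map_sum]
        simp only [map_smul, lam_basisFam, smul_eq_mul, mul_ite, mul_one, mul_zero]
        rw [Finset.sum_ite_eq' (bigF f) s (fun t => lam t f)]
        by_cases hs : s ∈ bigF f
        · rw [if_pos hs, sub_self]
        · rw [if_neg hs, sub_zero]
          by_contra hne
          exact hs (lam_mem_bigF f hful s hne)
      have hzero := lam_zero_eq_zero _ hg
      rw [sub_eq_zero] at hzero
      rw [hzero]
      exact Submodule.sum_mem _ fun t _ =>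
        Submodule.smul_mem _ _ (Submodule.subset_span ⟨t, rfl⟩)
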